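/- In the discrete-time SIS Markov chain, for every edge (i,j) and time t, the quantity q_ij(t) = P(X_i(t)=0, X_j(t)=1) satisfies q_ij(t+1) ≤ δ(1-δ) p_j(t) + (1-δ)(1-δ-β) q_ij(t) + βδ q_ji(t) + β(1+δ) ∑_{ℓ ∼ j, ℓ ≠ i} q_jℓ(t). -/

import Mathlib

/-!
Given the current configuration `X`, the nodes update independently, so the probability that
after one step `i` is healthy and `j` infected is the product of the two one-node transition
probabilities. Splitting on the states of `i` and `j` and bounding infection through `m`
infected neighbours by Bernoulli's inequality `1 - (1 - β) ^ m ≤ m β`, this product is at most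
a combination of the indicators of the events measured by `marg` and `qPair`; averaging over
`X` gives the inequality.
-/

open Finset

/-- One-step transition probability of the discrete-time SIS Markov chain on `G`:
given the current state `X`, each node updates independently; an infected node
recovers with probability `δ`; a susceptible node with `m` infected neighbors
becomes infected with probability `1 - (1-β)^m`. -/
def sisStep {n : ℕ} (G : SimpleGraph (Fin n)) [DecidableRel G.Adj] (β δ : ℝ)
    (X Y : Fin n → Bool) : ℝ :=
  ∏ i : Fin n,
    if X i = true then (if Y i = true then 1 - δ else δ)
    else
      if Y i = true then
        1 - (1 - β) ^ ((G.neighborFinset i).filter fun j => X j = true).card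
      else (1 - β) ^ ((G.neighborFinset i).filter fun j => X j = true).card

/-- Marginal probability of infection of node `i` under distribution `μ`. -/
def marg {n : ℕ} (μ : (Fin n → Bool) → ℝ) (i : Fin n) : ℝ :=
  ∑ X : Fin n → Bool, if X i = true then μ X else 0

/-- Pairwise probability that both `i` and `j` are infected under `μ`. -/
def pPair {n : ℕ} (μ : (Fin n → Bool) → ℝ) (i j : Fin n) : ℝ :=
  ∑ X : Fin n → Bool, if X i = true ∧ X j = true then μ X else 0

/-- Probability that `i` is healthy and `j` is infected under `μ`. -/
def qPair {n : ℕ} (μ : (Fin n → Bool) → ℝ) (i j : Fin n) : ℝ :=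
  ∑ X : Fin n → Bool, if X i = false ∧ X j = true then μ X else 0

theorem Fintype.sum_prod_ite_apply_eq_mul {ι α R : Type*} [Fintype ι] [DecidableEq ι]
    [Fintype α] [DecidableEq α] [CommSemiring R] (g : ι → α → R) (hg : ∀ k, ∑ c, g k c = 1)
    {i j : ι} (hij : i ≠ j) (a b : α) :
    ∑ Y : ι → α, (if Y i = a ∧ Y j = b then ∏ k, g k (Y k) else 0) = g i a * g j b := by
  set h : ι → α → R := fun k c =>
    g k c * (if k = i then (if c = a then 1 else 0) else 1) *
      (if k = j then (if c = b then 1 else 0) else 1)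
  have hprod : ∀ Y : ι → α,
      ∏ k, h k (Y k) = if Y i = a ∧ Y j = b then ∏ k, g k (Y k) else 0 := by
    intro Y
    simp only [h, prod_mul_distrib, Fintype.prod_ite_eq', ite_and]
    split_ifs <;> simp
  have hsum : ∀ k, ∑ c, h k c = (if k = i then g i a else 1) * (if k = j then g j b else 1) := by
    intro k
    by_cases hki : k = i
    · subst hki; simp [h, hij]
    · by_cases hkj : k = j
      · subst hkj; simp [h, hki]
      · simp [h, hki, hkj, hg]
  simp_rw [← hprod, ← Fintype.prod_sum, hsum, prod_mul_distrib, Fintype.prod_ite_eq']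

theorem marg_eq_sum_mul {n : ℕ} (μ : (Fin n → Bool) → ℝ) (i : Fin n) :
    marg μ i = ∑ X, μ X * if X i = true then 1 else 0 := by
  simp only [marg, mul_boole]

theorem qPair_eq_sum_mul {n : ℕ} (μ : (Fin n → Bool) → ℝ) (i j : Fin n) :
    qPair μ i j = ∑ X, μ X * if X i = false ∧ X j = true then 1 else 0 := by
  simp only [qPair, mul_boole]

theorem one_sub_one_sub_pow_le_mul {β : ℝ} (hβ : β ≤ 2) (m : ℕ) : 1 - (1 - β) ^ m ≤ m * β := by
  have := one_add_mul_le_pow (a := -β) (by linarith) m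
  rw [← sub_eq_add_neg] at this
  linarith

namespace SIS

variable {n : ℕ} (G : SimpleGraph (Fin n)) [DecidableRel G.Adj] (β δ : ℝ)

def infectedNeighbors (X : Fin n → Bool) (k : Fin n) : ℕ :=
  ((G.neighborFinset k).filter fun l => X l = true).card

def nodeStep (X : Fin n → Bool) (k : Fin n) (b : Bool) : ℝ :=
  if X k = true then (if b = true then 1 - δ else δ)
  else if b = true then 1 - (1 - β) ^ infectedNeighbors G X k
  else (1 - β) ^ infectedNeighbors G X k

theorem sisStep_eq_prod_nodeStep (X Y : Fin n → Bool) :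
    sisStep G β δ X Y = ∏ k, nodeStep G β δ X k (Y k) := rfl

theorem nodeStep_sum_eq_one (X : Fin n → Bool) (k : Fin n) :
    ∑ b, nodeStep G β δ X k b = 1 := by
  cases h : X k <;> simp [nodeStep, h]

theorem qPair_step {μ ν : (Fin n → Bool) → ℝ}
    (hν : ∀ Y, ν Y = ∑ X, μ X * sisStep G β δ X Y) {i j : Fin n} (hij : i ≠ j) :
    qPair ν i j = ∑ X, μ X * (nodeStep G β δ X i false * nodeStep G β δ X j true) := by
  calc qPair ν i j
      = ∑ Y, ∑ X, μ X * (if Y i = false ∧ Y j = true then sisStep G β δ X Y else 0) := by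
        simp only [qPair, hν, mul_ite, mul_zero, sum_ite_irrel, sum_const_zero]
    _ = ∑ X, μ X * ∑ Y, (if Y i = false ∧ Y j = true then sisStep G β δ X Y else 0) := by
        rw [sum_comm]; simp_rw [mul_sum]
    _ = _ := by
        simp_rw [sisStep_eq_prod_nodeStep,
          Fintype.sum_prod_ite_apply_eq_mul _ (nodeStep_sum_eq_one G β δ _) hij]

theorem infectedNeighbors_eq_add_sum_erase (X : Fin n → Bool) {i j : Fin n} (hij : G.Adj i j) :
    (infectedNeighbors G X j : ℝ) =
      (if X i = true then 1 else 0) +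
        ∑ l ∈ (G.neighborFinset j).erase i, if X l = true then 1 else 0 := by
  rw [infectedNeighbors, card_filter, ← add_sum_erase _ _ (by simpa using hij.symm)]
  push_cast
  rfl

theorem nodeStep_false_mul_nodeStep_true_le (hβ0 : 0 ≤ β) (hβ1 : β ≤ 1) (hδ0 : 0 ≤ δ)
    (hδ1 : δ ≤ 1) (X : Fin n → Bool) {i j : Fin n} (hij : G.Adj i j) :
    nodeStep G β δ X i false * nodeStep G β δ X j true ≤
      δ * (1 - δ) * (if X j = true then 1 else 0) +
        (1 - δ) * (1 - δ - β) * (if X i = false ∧ X j = true then 1 else 0) +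
        β * δ * (if X j = false ∧ X i = true then 1 else 0) +
        β * (1 + δ) * ∑ l ∈ (G.neighborFinset j).erase i,
          (if X j = false ∧ X l = true then 1 else 0) := by
  have hpow_nonneg (m : ℕ) : 0 ≤ (1 - β) ^ m := pow_nonneg (by linarith) m
  have hpow_le_one (m : ℕ) : (1 - β) ^ m ≤ 1 := pow_le_one₀ (by linarith) (by linarith)
  have hbern := one_sub_one_sub_pow_le_mul (by linarith : β ≤ 2) (infectedNeighbors G X j)
  have hj := infectedNeighbors_eq_add_sum_erase G X hij
  set S := ∑ l ∈ (G.neighborFinset j).erase i, if X l = true then (1 : ℝ) else 0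
  have hS : 0 ≤ S := sum_nonneg fun l _ => by positivity
  cases hXi : X i <;> cases hXj : X j <;>
    simp only [nodeStep, hXi, hXj, Bool.false_eq_true, Bool.true_eq_false, if_true, if_false,
      and_true, and_false, true_and, false_and, sum_const_zero, mul_zero, mul_one, add_zero,
      zero_add, le_refl] at hj ⊢
  · rw [hj] at hbern
    nlinarith [hpow_nonneg (infectedNeighbors G X i), hpow_le_one (infectedNeighbors G X i),
      hpow_le_one (infectedNeighbors G X j), mul_nonneg (mul_nonneg hβ0 hδ0) hS]
  · have hi : 1 ≤ infectedNeighbors G X i :=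
      card_pos.mpr ⟨j, mem_filter.mpr ⟨(G.mem_neighborFinset i j).mpr hij, hXj⟩⟩
    have := pow_le_pow_of_le_one (by linarith) (by linarith) hi (a := 1 - β)
    nlinarith
  · rw [hj] at hbern
    nlinarith [mul_nonneg (mul_nonneg hβ0 hδ0) hS]

end SIS

theorem stmt11_general {n : ℕ} (G : SimpleGraph (Fin n)) [DecidableRel G.Adj]
    (β δ : ℝ) (hβ0 : 0 ≤ β) (hβ1 : β ≤ 1) (hδ0 : 0 ≤ δ) (hδ1 : δ ≤ 1)
    (μ : ℕ → (Fin n → Bool) → ℝ)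
    (hnn : ∀ t X, 0 ≤ μ t X)
    (hstep : ∀ t Y, μ (t + 1) Y = ∑ X : Fin n → Bool, μ t X * sisStep G β δ X Y)
    (t : ℕ) (i j : Fin n) (hij : G.Adj i j) :
    qPair (μ (t + 1)) i j ≤
      δ * (1 - δ) * marg (μ t) j + (1 - δ) * (1 - δ - β) * qPair (μ t) i j +
        β * δ * qPair (μ t) j i +
        β * (1 + δ) * ∑ l ∈ (G.neighborFinset j).erase i, qPair (μ t) j l := by
  rw [SIS.qPair_step G β δ (hstep t) hij.ne]
  refine (sum_le_sum fun X _ => mul_le_mul_of_nonneg_left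
    (SIS.nodeStep_false_mul_nodeStep_true_le G β δ hβ0 hβ1 hδ0 hδ1 X hij) (hnn t X)).trans_eq ?_
  simp only [marg_eq_sum_mul, qPair_eq_sum_mul, mul_add, sum_add_distrib, mul_sum,
    mul_left_comm (μ t _)]
  rw [sum_comm (s := univ)]

theorem stmt11 {n : ℕ} (G : SimpleGraph (Fin n)) [DecidableRel G.Adj]
    (β δ : ℝ) (hβ0 : 0 ≤ β) (hβ1 : β ≤ 1) (hδ0 : 0 ≤ δ) (hδ1 : δ ≤ 1)
    (μ : ℕ → (Fin n → Bool) → ℝ)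
    (hnn : ∀ t X, 0 ≤ μ t X)
    (hsum : ∀ t, ∑ X : Fin n → Bool, μ t X = 1)
    (hstep : ∀ t Y, μ (t + 1) Y = ∑ X : Fin n → Bool, μ t X * sisStep G β δ X Y)
    (t : ℕ) (i j : Fin n) (hij : G.Adj i j) :
    qPair (μ (t + 1)) i j ≤
      δ * (1 - δ) * marg (μ t) j + (1 - δ) * (1 - δ - β) * qPair (μ t) i j +
        β * δ * qPair (μ t) j i +
        β * (1 + δ) * ∑ l ∈ (G.neighborFinset j).erase i, qPair (μ t) j l :=
  stmt11_general G β δ hβ0 hβ1 hδ0 hδ1 μ hnn hstep t i j hij
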